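/- (Two-point feedback second-moment bound.) Let (Ξ, ν) be a probability space and F : ℝ^d × Ξ → ℝ be such that for every ξ, the function F(·, ξ) is differentiable with L₂-Lipschitz gradient (the same L₂ for all ξ). Let δ : ℝ^d → ℝ satisfy |δ(x)| ≤ Δ for all x, let ξ be distributed according to ν independently of (e, r), and define g̃(x, ξ, e, r) := d (F(x + γ r e, ξ) + δ(x + γ r e) − F(x − γ r e, ξ) − δ(x − γ r e)) K(r) e/(2γ). Then for every x ∈ ℝ^d, E[‖g̃(x, ξ, e, r)‖₂²] ≤ κ (6 d E_ξ[‖∇_x F(x, ξ)‖₂²] + (3/4) d² L₂² γ²) + 2 κ d² Δ²/γ². -/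

import Mathlib

/-!
Write `h = γ r e` and `v = ∇ₓF(x, ξ)`. Taylor's formula for a function with `L₂`-Lipschitz
gradient, applied at `x ± h`, shows that `F(x + h, ξ) - F(x - h, ξ)` is `2⟪v, h⟫` up to `L₂‖h‖²`,
while the two noise terms differ by at most `2Δ`. Since `|r| ≤ 1` and `‖e‖ = 1`, squaring gives a
pointwise bound `24γ²⟪v, e⟫² + 3L₂²γ⁴ + 8Δ²` for the squared difference. In expectation,
independence factors out `E[K(r)²]`, and rotation invariance of `e` gives `E⟪v, e⟫² = ‖v‖² / d`:
vectors of equal norm are exchanged by a reflection, so `E⟪v, e⟫²` depends only on `‖v‖`, and the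
squared coordinates of `e` in an orthonormal basis sum to `1`.
-/

open MeasureTheory ProbabilityTheory Filter
open scoped ENNReal RealInnerProductSpace Topology

section Gradient

variable {E : Type*} [NormedAddCommGroup E] [InnerProductSpace ℝ E] [CompleteSpace E]

theorem HasGradientAt.hasDerivAt_comp_add_smul {f : E → ℝ} {g x h : E} {t : ℝ}
    (hf : HasGradientAt f g (x + t • h)) :
    HasDerivAt (fun s : ℝ => f (x + s • h)) ⟪g, h⟫ t := by
  have hline : HasDerivAt (fun s : ℝ => x + s • h) h t := by
    simpa using ((hasDerivAt_id t).smul_const h).const_add x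
  simpa [Function.comp_def] using hf.hasFDerivAt.comp_hasDerivAt t hline

theorem abs_sub_sub_inner_gradient_le {f : E → ℝ} {L : ℝ} (hf : Differentiable ℝ f)
    (hlip : ∀ a b, ‖gradient f a - gradient f b‖ ≤ L * ‖a - b‖) (x h : E) :
    |f (x + h) - f x - ⟪gradient f x, h⟫| ≤ L / 2 * ‖h‖ ^ 2 := by
  have hψ : ∀ t : ℝ, HasDerivAt (fun t => f (x + t • h) - f x - t * ⟪gradient f x, h⟫)
      (⟪gradient f (x + t • h), h⟫ - ⟪gradient f x, h⟫) t := fun t =>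
    ((((hf _).hasGradientAt.hasDerivAt_comp_add_smul).sub_const _).sub
      ((hasDerivAt_id t).mul_const _)).congr_deriv (by simp)
  have hB : ∀ t : ℝ, HasDerivAt (fun t => L / 2 * ‖h‖ ^ 2 * t ^ 2) (L * ‖h‖ ^ 2 * t) t :=
    fun t => ((hasDerivAt_pow 2 t).const_mul _).congr_deriv (by ring)
  have hbound : ∀ t ∈ Set.Ico (0 : ℝ) 1,
      ‖⟪gradient f (x + t • h), h⟫ - ⟪gradient f x, h⟫‖ ≤ L * ‖h‖ ^ 2 * t := by
    intro t ht
    calc ‖⟪gradient f (x + t • h), h⟫ - ⟪gradient f x, h⟫‖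
        = |⟪gradient f (x + t • h) - gradient f x, h⟫| := by rw [inner_sub_left, Real.norm_eq_abs]
      _ ≤ ‖gradient f (x + t • h) - gradient f x‖ * ‖h‖ := abs_real_inner_le_norm _ _
      _ ≤ L * ‖x + t • h - x‖ * ‖h‖ := by gcongr; exact hlip _ _
      _ = L * ‖h‖ ^ 2 * t := by
        rw [add_sub_cancel_left, norm_smul, Real.norm_of_nonneg ht.1]; ring
  have := image_norm_le_of_norm_deriv_right_le_deriv_boundary
    (fun t _ => (hψ t).continuousAt.continuousWithinAt) (fun t _ => (hψ t).hasDerivWithinAt)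
    (by simp) hB hbound (Set.right_mem_Icc.mpr zero_le_one)
  simpa using this

theorem abs_sub_sub_two_inner_gradient_le {f : E → ℝ} {L : ℝ} (hf : Differentiable ℝ f)
    (hlip : ∀ a b, ‖gradient f a - gradient f b‖ ≤ L * ‖a - b‖) (x h : E) :
    |f (x + h) - f (x - h) - 2 * ⟪gradient f x, h⟫| ≤ L * ‖h‖ ^ 2 := by
  have h₁ := abs_sub_sub_inner_gradient_le hf hlip x h
  have h₂ := abs_sub_sub_inner_gradient_le hf hlip x (-h)
  rw [← sub_eq_add_neg, inner_neg_right, norm_neg] at h₂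
  calc |f (x + h) - f (x - h) - 2 * ⟪gradient f x, h⟫|
      = |(f (x + h) - f x - ⟪gradient f x, h⟫) - (f (x - h) - f x - -⟪gradient f x, h⟫)| := by
        congr 1; ring
    _ ≤ L / 2 * ‖h‖ ^ 2 + L / 2 * ‖h‖ ^ 2 := (abs_sub _ _).trans (add_le_add h₁ h₂)
    _ = L * ‖h‖ ^ 2 := by ring

theorem norm_two_point_estimate_sq_le {f : E → ℝ} {L : ℝ} (hf : Differentiable ℝ f)
    (hlip : ∀ a b, ‖gradient f a - gradient f b‖ ≤ L * ‖a - b‖) {δ : E → ℝ} {Δ : ℝ}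
    (hδ : ∀ x, |δ x| ≤ Δ) (a k : ℝ) {γ t : ℝ} (hγ : γ ≠ 0) (ht : |t| ≤ 1) {u : E}
    (hu : ‖u‖ = 1) (x : E) :
    ‖(a / (2 * γ) * ((f (x + (γ * t) • u) + δ (x + (γ * t) • u))
        - (f (x - (γ * t) • u) + δ (x - (γ * t) • u))) * k) • u‖ ^ 2
      ≤ k ^ 2 * (6 * a ^ 2 * ⟪gradient f x, u⟫ ^ 2 + 3 / 4 * a ^ 2 * L ^ 2 * γ ^ 2
        + 2 * a ^ 2 * Δ ^ 2 / γ ^ 2) := by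
  set c := ⟪gradient f x, u⟫
  set A := f (x + (γ * t) • u) - f (x - (γ * t) • u)
  set B := δ (x + (γ * t) • u) - δ (x - (γ * t) • u)
  have hA : |A - 2 * (γ * t * c)| ≤ L * (γ * t) ^ 2 := by
    have := abs_sub_sub_two_inner_gradient_le hf hlip x ((γ * t) • u)
    rwa [real_inner_smul_right, norm_smul, hu, mul_one, Real.norm_eq_abs, sq_abs] at this
  have hB : |B| ≤ 2 * Δ :=
    (abs_sub _ _).trans (by linarith [hδ (x + (γ * t) • u), hδ (x - (γ * t) • u)])
  have ht2 : t ^ 2 ≤ 1 := (sq_le_one_iff_abs_le_one t).mpr ht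
  have hS : (A + B) ^ 2 ≤ 24 * γ ^ 2 * c ^ 2 + 3 * L ^ 2 * γ ^ 4 + 8 * Δ ^ 2 := by
    set p := 2 * (γ * t * c)
    have hq := sq_le_sq' (abs_le.mp hA).1 (abs_le.mp hA).2
    have hB2 := sq_le_sq' (abs_le.mp hB).1 (abs_le.mp hB).2
    have hp : p ^ 2 ≤ 4 * γ ^ 2 * c ^ 2 := by
      nlinarith [mul_nonneg (sq_nonneg (γ * c)) (sub_nonneg.mpr ht2)]
    have hq' : (L * (γ * t) ^ 2) ^ 2 ≤ L ^ 2 * γ ^ 4 := by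
      have ht4 : (t ^ 2) ^ 2 ≤ 1 := pow_le_one₀ (sq_nonneg t) ht2
      nlinarith [mul_nonneg (sq_nonneg (L * γ ^ 2)) (sub_nonneg.mpr ht4)]
    have hAB : (A + B) ^ 2 ≤ 2 * A ^ 2 + 2 * B ^ 2 := by nlinarith [sq_nonneg (A - B)]
    have hpq : A ^ 2 ≤ 3 * p ^ 2 + 3 / 2 * (A - p) ^ 2 := by nlinarith [sq_nonneg (3 * p - A)]
    linarith
  have hsum : (f (x + (γ * t) • u) + δ (x + (γ * t) • u))
      - (f (x - (γ * t) • u) + δ (x - (γ * t) • u)) = A + B := by ring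
  rw [norm_smul, hu, mul_one, Real.norm_eq_abs, sq_abs, hsum]
  calc (a / (2 * γ) * (A + B) * k) ^ 2 = a ^ 2 * k ^ 2 / (4 * γ ^ 2) * (A + B) ^ 2 := by
        field_simp; ring
    _ ≤ a ^ 2 * k ^ 2 / (4 * γ ^ 2) * (24 * γ ^ 2 * c ^ 2 + 3 * L ^ 2 * γ ^ 4 + 8 * Δ ^ 2) := by
        gcongr
    _ = _ := by field_simp; ring

theorem measurable_inner_gradient {Ξ : Type*} [MeasurableSpace Ξ] {F : E → Ξ → ℝ}
    (hF_meas : ∀ y, Measurable (F y)) {x : E} (hF_diff : ∀ s, DifferentiableAt ℝ (F · s) x)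
    (w : E) : Measurable fun s => ⟪gradient (F · s) x, w⟫ := by
  have hslope : Tendsto (fun n : ℕ => ((n : ℝ) + 1)⁻¹) atTop (𝓝[>] 0) :=
    tendsto_inv_atTop_nhdsGT_zero.comp (tendsto_natCast_atTop_atTop.atTop_add tendsto_const_nhds)
  refine measurable_of_tendsto_metrizable (f := fun (n : ℕ) s =>
      ((n : ℝ) + 1)⁻¹⁻¹ * (F (x + ((n : ℝ) + 1)⁻¹ • w) s - F x s))
    (fun n => ((hF_meas _).sub (hF_meas _)).const_mul _) (tendsto_pi_nhds.mpr fun s => ?_)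
  have hderiv := HasGradientAt.hasDerivAt_comp_add_smul (t := 0) (h := w)
    (by simpa using (hF_diff s).hasGradientAt)
  exact (hderiv.tendsto_slope_zero_right.comp hslope).congr fun n => by simp

end Gradient

theorem ProbabilityTheory.IndepFun.integral_comp_eq_integral_integral_map
    {Ω α β : Type*} [MeasurableSpace Ω] [MeasurableSpace α] [MeasurableSpace β]
    {P : Measure Ω} [IsFiniteMeasure P] {X : Ω → α} {Y : Ω → β} (hXY : IndepFun X Y P)
    (hX : Measurable X) (hY : Measurable Y) {f : α × β → ℝ} (hf : StronglyMeasurable f)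
    (hint : Integrable (fun ω => f (X ω, Y ω)) P) :
    ∫ ω, f (X ω, Y ω) ∂P = ∫ y, ∫ ω, f (X ω, y) ∂P ∂(P.map Y) := by
  have hmap := (indepFun_iff_map_prod_eq_prod_map_map hX.aemeasurable hY.aemeasurable).mp hXY
  have hint' : Integrable f ((P.map X).prod (P.map Y)) := by
    rw [← hmap]
    exact (integrable_map_measure hf.aestronglyMeasurable (hX.prodMk hY).aemeasurable).mpr hint
  rw [← integral_map (hX.prodMk hY).aemeasurable hf.aestronglyMeasurable, hmap,
    integral_prod_symm f hint']
  refine integral_congr_ae (ae_of_all _ fun y => ?_)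
  exact integral_map hX.aemeasurable
    (hf.comp_measurable measurable_prodMk_right).aestronglyMeasurable

theorem ae_mem_of_map_eq_smul_restrict {Ω α : Type*} [MeasurableSpace Ω] [MeasurableSpace α]
    {P : Measure Ω} {r : Ω → α} (hr : Measurable r) {s : Set α} (hs : MeasurableSet s)
    {μ : Measure α} {c : ℝ≥0∞} (h : P.map r = c • μ.restrict s) : ∀ᵐ ω ∂P, r ω ∈ s := by
  have : ∀ᵐ a ∂(P.map r), a ∈ s := by
    rw [h]
    exact Measure.ae_smul_measure (ae_restrict_mem hs) c
  exact ae_of_ae_map hr.aemeasurable this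

section RotationInvariant

variable {E : Type*} [NormedAddCommGroup E] [InnerProductSpace ℝ E] [FiniteDimensional ℝ E]
  [MeasurableSpace E] [BorelSpace E]

theorem measurable_of_measurable_inner {α : Type*} [MeasurableSpace α] {g : α → E}
    (hg : ∀ w, Measurable fun a => ⟪g a, w⟫) : Measurable g := by
  let b := stdOrthonormalBasis ℝ E
  have : g = fun a => ∑ i, ⟪g a, b i⟫ • b i := funext fun a => by
    simp_rw [real_inner_comm _ (g a)]
    exact (b.sum_repr' (g a)).symm
  rw [this]
  exact Finset.measurable_fun_sum _ fun i _ => (hg (b i)).smul_const _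

theorem integrable_inner_sq_of_ae_norm_eq_one {μ : Measure E} [IsFiniteMeasure μ]
    (hμ : ∀ᵐ u ∂μ, ‖u‖ = 1) (w : E) : Integrable (fun u => ⟪w, u⟫ ^ 2) μ := by
  refine (integrable_const (‖w‖ ^ 2)).mono' (by fun_prop) (hμ.mono fun u hu => ?_)
  have := abs_real_inner_le_norm w u
  rw [hu, mul_one] at this
  rw [Real.norm_eq_abs, abs_pow]
  gcongr

theorem integral_inner_sq_linearIsometryEquiv_apply {μ : Measure E}
    (hμ : ∀ O : E ≃ₗᵢ[ℝ] E, μ.map O = μ) (O : E ≃ₗᵢ[ℝ] E) (w : E) :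
    ∫ u, ⟪O w, u⟫ ^ 2 ∂μ = ∫ u, ⟪w, u⟫ ^ 2 ∂μ := by
  conv_lhs => rw [← hμ O]
  rw [integral_map O.continuous.aemeasurable (by fun_prop)]
  simp only [LinearIsometryEquiv.inner_map_map]

theorem integral_inner_sq_eq_of_norm_eq {μ : Measure E}
    (hμ : ∀ O : E ≃ₗᵢ[ℝ] E, μ.map O = μ) {w₁ w₂ : E} (h : ‖w₁‖ = ‖w₂‖) :
    ∫ u, ⟪w₁, u⟫ ^ 2 ∂μ = ∫ u, ⟪w₂, u⟫ ^ 2 ∂μ := by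
  rw [← Submodule.reflection_sub h, integral_inner_sq_linearIsometryEquiv_apply hμ]

theorem finrank_mul_integral_inner_sq {μ : Measure E} [IsProbabilityMeasure μ]
    (hμ_norm : ∀ᵐ u ∂μ, ‖u‖ = 1) (hμ_inv : ∀ O : E ≃ₗᵢ[ℝ] E, μ.map O = μ) (v : E) :
    (Module.finrank ℝ E : ℝ) * ∫ u, ⟪v, u⟫ ^ 2 ∂μ = ‖v‖ ^ 2 := by
  let b := stdOrthonormalBasis ℝ E
  have hsum : ∑ i, ∫ u, ⟪b i, u⟫ ^ 2 ∂μ = 1 := by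
    rw [← integral_finsetSum _ fun i _ => integrable_inner_sq_of_ae_norm_eq_one hμ_norm (b i)]
    rw [integral_congr_ae (g := fun _ => (1 : ℝ))
      (hμ_norm.mono fun u hu => by simp only [b.sum_sq_inner_right, hu, one_pow])]
    simp
  have hscale : ∀ i, ∫ u, ⟪v, u⟫ ^ 2 ∂μ = ‖v‖ ^ 2 * ∫ u, ⟪b i, u⟫ ^ 2 ∂μ := fun i => by
    rw [integral_inner_sq_eq_of_norm_eq hμ_inv (w₂ := ‖v‖ • b i) (by simp [norm_smul]),
      ← integral_const_mul]
    simp only [real_inner_smul_left, mul_pow]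
  calc (Module.finrank ℝ E : ℝ) * ∫ u, ⟪v, u⟫ ^ 2 ∂μ = ∑ i, ‖v‖ ^ 2 * ∫ u, ⟪b i, u⟫ ^ 2 ∂μ := by
        simp [← hscale]
    _ = ‖v‖ ^ 2 := by rw [← Finset.mul_sum, hsum, mul_one]

section RandomDirection

variable {Ω Ξ β : Type*} [MeasurableSpace Ω] [MeasurableSpace Ξ] [MeasurableSpace β]
  {P : Measure Ω} {e : Ω → E} {r : Ω → β} {ξ : Ω → Ξ}

theorem finrank_mul_integral_inner_sq_of_map_eq [IsProbabilityMeasure P]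
    (he_meas : Measurable e) (he_norm : ∀ ω, ‖e ω‖ = 1)
    (he_unif : ∀ O : E ≃ₗᵢ[ℝ] E, P.map (fun ω => O (e ω)) = P.map e) (v : E) :
    (Module.finrank ℝ E : ℝ) * ∫ ω, ⟪v, e ω⟫ ^ 2 ∂P = ‖v‖ ^ 2 := by
  have : IsProbabilityMeasure (P.map e) := Measure.isProbabilityMeasure_map he_meas.aemeasurable
  rw [← integral_map (f := fun u => ⟪v, u⟫ ^ 2) he_meas.aemeasurable (by fun_prop)]
  refine finrank_mul_integral_inner_sq ?_ (fun O => ?_) v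
  · exact (ae_map_iff he_meas.aemeasurable
      (measurableSet_eq_fun (by fun_prop) (by fun_prop))).mpr (ae_of_all _ he_norm)
  · rw [Measure.map_map O.continuous.measurable he_meas]
    exact he_unif O

variable {w : β → ℝ} {v : Ξ → E}

theorem integrable_mul_inner_sq (he_meas : Measurable e) (he_norm : ∀ ω, ‖e ω‖ = 1)
    (hr_meas : Measurable r) (hξ_meas : Measurable ξ)
    (hξ_indep : IndepFun (fun ω => (e ω, r ω)) ξ P) (hw_meas : Measurable w)
    (hw_int : Integrable (fun ω => w (r ω)) P) (hv_meas : Measurable v)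
    (hv_int : Integrable (fun s => ‖v s‖ ^ 2) (P.map ξ)) :
    Integrable (fun ω => w (r ω) * ⟪v (ξ ω), e ω⟫ ^ 2) P := by
  have hrξ : IndepFun (fun ω => w (r ω)) (fun ω => ‖v (ξ ω)‖ ^ 2) P :=
    hξ_indep.comp (φ := fun z : E × β => w z.2) (ψ := fun s => ‖v s‖ ^ 2) (by fun_prop)
      (by fun_prop)
  refine (hrξ.integrable_mul hw_int (hv_int.comp_measurable hξ_meas)).mono (by fun_prop)
    (ae_of_all _ fun ω => ?_)
  have := abs_real_inner_le_norm (v (ξ ω)) (e ω)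
  rw [he_norm ω, mul_one] at this
  simp only [Pi.mul_apply, norm_mul, norm_pow, Real.norm_eq_abs, abs_norm]
  gcongr

theorem finrank_mul_integral_mul_inner_sq [IsProbabilityMeasure P] (he_meas : Measurable e)
    (he_norm : ∀ ω, ‖e ω‖ = 1)
    (he_unif : ∀ O : E ≃ₗᵢ[ℝ] E, P.map (fun ω => O (e ω)) = P.map e)
    (hr_meas : Measurable r) (hindep : IndepFun e r P) (hξ_meas : Measurable ξ)
    (hξ_indep : IndepFun (fun ω => (e ω, r ω)) ξ P) (hw_meas : Measurable w)
    (hw_int : Integrable (fun ω => w (r ω)) P) (hv_meas : Measurable v)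
    (hv_int : Integrable (fun s => ‖v s‖ ^ 2) (P.map ξ)) :
    (Module.finrank ℝ E : ℝ) * ∫ ω, w (r ω) * ⟪v (ξ ω), e ω⟫ ^ 2 ∂P
      = (∫ ω, w (r ω) ∂P) * ∫ s, ‖v s‖ ^ 2 ∂(P.map ξ) := by
  have hfubini := hξ_indep.integral_comp_eq_integral_integral_map (he_meas.prodMk hr_meas) hξ_meas
    (f := fun p => w p.1.2 * ⟪v p.2, p.1.1⟫ ^ 2) (by fun_prop)
    (integrable_mul_inner_sq he_meas he_norm hr_meas hξ_meas hξ_indep hw_meas hw_int hv_meas hv_int)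
  have hinner : ∀ s, (Module.finrank ℝ E : ℝ) * ∫ ω, w (r ω) * ⟪v s, e ω⟫ ^ 2 ∂P
      = (∫ ω, w (r ω) ∂P) * ‖v s‖ ^ 2 := fun s => by
    rw [hindep.symm.integral_fun_comp_mul_comp (f := w) (g := fun u => ⟪v s, u⟫ ^ 2)
      hr_meas.aemeasurable he_meas.aemeasurable
      hw_meas.aestronglyMeasurable (by fun_prop), mul_left_comm,
      finrank_mul_integral_inner_sq_of_map_eq he_meas he_norm he_unif]
  simp only at hfubini
  rw [hfubini, ← integral_const_mul, ← integral_const_mul]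
  simp only [hinner]

end RandomDirection

end RotationInvariant

theorem kernel_second_moment_two_point_feedback_general
    {Ω : Type*} {m0 : MeasurableSpace Ω} (P : Measure Ω) [IsProbabilityMeasure P]
    {Ξ : Type*} [MeasurableSpace Ξ] (ν : Measure Ξ)
    {d : ℕ} (F : EuclideanSpace ℝ (Fin d) → Ξ → ℝ) (L₂ : ℝ)
    (hF_meas : Measurable (Function.uncurry F))
    (hF_diff : ∀ s, Differentiable ℝ (fun y => F y s))
    (hF_lip : ∀ s, ∀ x y : EuclideanSpace ℝ (Fin d),
      ‖gradient (fun y' => F y' s) x - gradient (fun y' => F y' s) y‖ ≤ L₂ * ‖x - y‖)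
    (δ : EuclideanSpace ℝ (Fin d) → ℝ) (Δ : ℝ)
    (hδ : ∀ x, |δ x| ≤ Δ)
    (γ : ℝ) (hγ : 0 < γ)
    (e : Ω → EuclideanSpace ℝ (Fin d)) (r : Ω → ℝ) (ξ : Ω → Ξ) (K : ℝ → ℝ)
    (he_meas : Measurable e) (he_norm : ∀ ω, ‖e ω‖ = 1)
    (he_unif : ∀ O : EuclideanSpace ℝ (Fin d) ≃ₗᵢ[ℝ] EuclideanSpace ℝ (Fin d),
      Measure.map (fun ω => O (e ω)) P = Measure.map e P)
    (hr_meas : Measurable r)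
    (hr_unif : Measure.map r P = (2⁻¹ : ℝ≥0∞) • volume.restrict (Set.Icc (-1 : ℝ) 1))
    (hindep : IndepFun e r P)
    (hξ_meas : Measurable ξ) (hξ_law : Measure.map ξ P = ν)
    (hξ_indep : IndepFun (fun ω => (e ω, r ω)) ξ P)
    (hK_meas : Measurable K)
    (hK2_int : Integrable (fun ω => (K (r ω)) ^ 2) P)
    (x : EuclideanSpace ℝ (Fin d))
    (hgrad_int : Integrable (fun s => ‖gradient (fun y => F y s) x‖ ^ 2) ν) :
    ∫ ω, ‖((d : ℝ) / (2 * γ) *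
          ((F (x + (γ * r ω) • e ω) (ξ ω) + δ (x + (γ * r ω) • e ω))
            - (F (x - (γ * r ω) • e ω) (ξ ω) + δ (x - (γ * r ω) • e ω))) * K (r ω)) • e ω‖ ^ 2 ∂P
      ≤ (∫ ω, (K (r ω)) ^ 2 ∂P) *
          (6 * d * (∫ s, ‖gradient (fun y => F y s) x‖ ^ 2 ∂ν)
            + 3 / 4 * (d : ℝ) ^ 2 * L₂ ^ 2 * γ ^ 2)
        + 2 * (∫ ω, (K (r ω)) ^ 2 ∂P) * (d : ℝ) ^ 2 * Δ ^ 2 / γ ^ 2 := by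
  set v : Ξ → EuclideanSpace ℝ (Fin d) := fun s => gradient (fun y => F y s) x
  have hv_meas : Measurable v := measurable_of_measurable_inner
    (measurable_inner_gradient (fun y => hF_meas.comp measurable_prodMk_left)
      (fun s => (hF_diff s).differentiableAt))
  have hr_ae : ∀ᵐ ω ∂P, |r ω| ≤ 1 :=
    (ae_mem_of_map_eq_smul_restrict hr_meas measurableSet_Icc hr_unif).mono fun _ => abs_le.mpr
  have hv_int : Integrable (fun s => ‖v s‖ ^ 2) (P.map ξ) := hξ_law ▸ hgrad_int
  have hint := integrable_mul_inner_sq he_meas he_norm hr_meas hξ_meas hξ_indep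
    (hK_meas.pow_const 2) hK2_int hv_meas hv_int
  have hmoment := finrank_mul_integral_mul_inner_sq he_meas he_norm he_unif hr_meas hindep
    hξ_meas hξ_indep (hK_meas.pow_const 2) hK2_int hv_meas hv_int
  rw [finrank_euclideanSpace_fin, hξ_law] at hmoment
  calc _ ≤ ∫ ω, 6 * (d : ℝ) ^ 2 * (K (r ω) ^ 2 * ⟪v (ξ ω), e ω⟫ ^ 2)
          + (3 / 4 * (d : ℝ) ^ 2 * L₂ ^ 2 * γ ^ 2 + 2 * (d : ℝ) ^ 2 * Δ ^ 2 / γ ^ 2)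
            * K (r ω) ^ 2 ∂P :=
        integral_mono_of_nonneg (ae_of_all _ fun ω => by positivity)
          ((hint.const_mul _).add (hK2_int.const_mul _)) (hr_ae.mono fun ω hω =>
            (norm_two_point_estimate_sq_le (hF_diff (ξ ω)) (hF_lip (ξ ω)) hδ d (K (r ω))
              hγ.ne' hω (he_norm ω) x).trans_eq (by ring))
    _ = _ := by
      rw [integral_add (hint.const_mul _) (hK2_int.const_mul _), integral_const_mul,
        integral_const_mul]
      linear_combination (6 * (d : ℝ)) * hmoment

/-- Second-moment bound for the two-point kernel-based gradient approximation,
where for every realization `s` the function `F(·, s)` is differentiable with `L₂`-Lipschitz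
gradient, both evaluations share the same realization `ξ ∼ ν` independent of `(e, r)`, and the
oracle carries bounded adversarial deterministic noise `δ` with `|δ| ≤ Δ`:
`E[‖g̃(x,ξ,e,r)‖²] ≤ κ(6d E_ξ[‖∇ₓF(x,ξ)‖²] + (3/4)d²L₂²γ²) + 2κd²Δ²/γ²`. -/
theorem kernel_second_moment_two_point_feedback
    {Ω : Type*} {m0 : MeasurableSpace Ω} (P : Measure Ω) [IsProbabilityMeasure P]
    {Ξ : Type*} [MeasurableSpace Ξ] (ν : Measure Ξ) [IsProbabilityMeasure ν]
    {d : ℕ} (F : EuclideanSpace ℝ (Fin d) → Ξ → ℝ) (L₂ : ℝ)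
    (hF_meas : Measurable (Function.uncurry F))
    (hF_diff : ∀ s, Differentiable ℝ (fun y => F y s))
    (hF_lip : ∀ s, ∀ x y : EuclideanSpace ℝ (Fin d),
      ‖gradient (fun y' => F y' s) x - gradient (fun y' => F y' s) y‖ ≤ L₂ * ‖x - y‖)
    (δ : EuclideanSpace ℝ (Fin d) → ℝ) (Δ : ℝ) (hδ_meas : Measurable δ)
    (hδ : ∀ x, |δ x| ≤ Δ)
    (γ : ℝ) (hγ : 0 < γ)
    (e : Ω → EuclideanSpace ℝ (Fin d)) (r : Ω → ℝ) (ξ : Ω → Ξ) (K : ℝ → ℝ)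
    (he_meas : Measurable e) (he_norm : ∀ ω, ‖e ω‖ = 1)
    (he_unif : ∀ O : EuclideanSpace ℝ (Fin d) ≃ₗᵢ[ℝ] EuclideanSpace ℝ (Fin d),
      Measure.map (fun ω => O (e ω)) P = Measure.map e P)
    (hr_meas : Measurable r)
    (hr_unif : Measure.map r P = (2⁻¹ : ℝ≥0∞) • volume.restrict (Set.Icc (-1 : ℝ) 1))
    (hindep : IndepFun e r P)
    (hξ_meas : Measurable ξ) (hξ_law : Measure.map ξ P = ν)
    (hξ_indep : IndepFun (fun ω => (e ω, r ω)) ξ P)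
    (hK_meas : Measurable K)
    (hK2_int : Integrable (fun ω => (K (r ω)) ^ 2) P)
    (x : EuclideanSpace ℝ (Fin d))
    (hgrad_int : Integrable (fun s => ‖gradient (fun y => F y s) x‖ ^ 2) ν) :
    ∫ ω, ‖((d : ℝ) / (2 * γ) *
          ((F (x + (γ * r ω) • e ω) (ξ ω) + δ (x + (γ * r ω) • e ω))
            - (F (x - (γ * r ω) • e ω) (ξ ω) + δ (x - (γ * r ω) • e ω))) * K (r ω)) • e ω‖ ^ 2 ∂P
      ≤ (∫ ω, (K (r ω)) ^ 2 ∂P) *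
          (6 * d * (∫ s, ‖gradient (fun y => F y s) x‖ ^ 2 ∂ν)
            + 3 / 4 * (d : ℝ) ^ 2 * L₂ ^ 2 * γ ^ 2)
        + 2 * (∫ ω, (K (r ω)) ^ 2 ∂P) * (d : ℝ) ^ 2 * Δ ^ 2 / γ ^ 2 :=
  kernel_second_moment_two_point_feedback_general (m0 := m0) P ν F L₂ hF_meas hF_diff hF_lip δ Δ hδ
    γ hγ e r ξ K he_meas he_norm he_unif hr_meas hr_unif hindep hξ_meas hξ_law hξ_indep hK_meas
    hK2_int x hgrad_int
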